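/- Let G be a context-free grammar in Chomsky normal form such that every parse tree of G has dimension at most d, and let R be a regular language recognized by an n-state NFA. If L(G) ∩ R is nonempty, then it contains a word of length at most C·(|N|·n²)^d for some constant C depending only on d. Hence the rational index of L(G) is O(n^{2d}). -/

import Mathlib

/-- A context-free grammar in Chomsky normal form (ignoring the rule `S → ε`):
rules are `A → BC` and `A → a`. -/
structure CNF (T N : Type) where
  start : N
  binRule : N → N → N → Prop   -- A → B C
  termRule : N → T → Prop      -- A → a

/-- Parse trees of a grammar in Chomsky normal form. -/
inductive DTree (T N : Type) where
  | leaf : N → T → DTree T N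
  | node : N → DTree T N → DTree T N → DTree T N

namespace DTree

variable {T N : Type}

/-- Nonterminal at the root. -/
def rootN : DTree T N → N
  | leaf A _ => A
  | node A _ _ => A

/-- The terminal word at the leaves. -/
def yield : DTree T N → List T
  | leaf _ a => [a]
  | node _ l r => yield l ++ yield r

/-- Height: number of edges on a longest root-to-leaf path. -/
def height : DTree T N → ℕ
  | leaf _ _ => 0
  | node _ l r => max (height l) (height r) + 1

/-- Dimension: leaves have dimension 0; an internal node has the maximum of its
children's dimensions if uniquely attained, else that maximum plus one. -/
def dim : DTree T N → ℕ
  | leaf _ _ => 0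
  | node _ l r => if dim l = dim r then dim l + 1 else max (dim l) (dim r)

/-- A tree is a valid parse tree with respect to the grammar `g`. -/
def wf (g : CNF T N) : DTree T N → Prop
  | leaf A a => g.termRule A a
  | node A l r => g.binRule A (rootN l) (rootN r) ∧ wf g l ∧ wf g r

end DTree

/-- `A` derives the terminal word `w` in `g`. -/
def CNF.Derives (g : CNF T N) (A : N) (w : List T) : Prop :=
  ∃ t : DTree T N, t.wf g ∧ t.rootN = A ∧ t.yield = w

/-- The language generated by the grammar. -/
def CNF.Lang (g : CNF T N) : Set (List T) := {w | g.Derives g.start w}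

/-- `GWord δ i w j`: there is a path from state `i` to state `j` labeled by `w`
in the labeled transition relation `δ`. -/
def GWord {Q T : Type} (δ : Q → T → Q → Prop) : Q → List T → Q → Prop
  | i, [], j => i = j
  | i, a :: w, j => ∃ k, δ i a k ∧ GWord δ k w j

/-- Acceptance by an NFA given by transition relation `δ`, initial states `I`
and final states `F`. -/
def NfaLang {Q T : Type} (δ : Q → T → Q → Prop) (I F : Set Q) : Set (List T) :=
  {w | ∃ i ∈ I, ∃ j ∈ F, GWord δ i w j}

section Aux
variable {T N Q : Type}

lemma one_le_yield_length (t : DTree T N) : 1 ≤ t.yield.length := by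
  induction t with
  | leaf A a => simp [DTree.yield]
  | node A l r ihl ihr => simp only [DTree.yield, List.length_append]; omega

lemma gword_append {δ : Q → T → Q → Prop} (u v : List T) (i j : Q) :
    GWord δ i (u ++ v) j ↔ ∃ k, GWord δ i u k ∧ GWord δ k v j := by
  induction u generalizing i with
  | nil => simp [GWord]
  | cons a u ih =>
    simp only [List.cons_append, GWord]
    constructor
    · rintro ⟨k, hk, h⟩
      obtain ⟨k', h1, h2⟩ := (ih k).1 h
      exact ⟨k', ⟨k, hk, h1⟩, h2⟩
    · rintro ⟨k', ⟨k, hk, h1⟩, h2⟩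
      exact ⟨k, hk, (ih k).2 ⟨k', h1, h2⟩⟩

lemma aux_pow (h a b : ℕ) (h1 : 1 ≤ h) (hab : a < b) : h ^ a + h ^ b ≤ (h + 1) ^ b := by
  have hb : b = (b - 1) + 1 := by omega
  have ha : h ^ a ≤ h ^ (b - 1) := Nat.pow_le_pow_right h1 (by omega)
  calc h ^ a + h ^ b ≤ h ^ (b - 1) + h ^ (b - 1) * h := by
        rw [← pow_succ, ← hb]; omega
    _ = h ^ (b - 1) * (h + 1) := by ring
    _ ≤ (h + 1) ^ (b - 1) * (h + 1) :=
        Nat.mul_le_mul_right _ (Nat.pow_le_pow_left (by omega) _)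
    _ = (h + 1) ^ b := by rw [← pow_succ, ← hb]

lemma yield_length_le (t : DTree T N) : t.yield.length ≤ (t.height + 1) ^ t.dim := by
  induction t with
  | leaf A a => simp [DTree.yield, DTree.height, DTree.dim]
  | node A l r ihl ihr =>
    simp only [DTree.yield, DTree.height, DTree.dim, List.length_append]
    set h := max l.height r.height + 1 with hh
    have hL : l.yield.length ≤ h ^ l.dim :=
      le_trans ihl (Nat.pow_le_pow_left (by omega) _)
    have hR : r.yield.length ≤ h ^ r.dim :=
      le_trans ihr (Nat.pow_le_pow_left (by omega) _)
    by_cases hd : l.dim = r.dim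
    · rw [if_pos hd]
      calc l.yield.length + r.yield.length ≤ h ^ l.dim + h ^ l.dim := by
            rw [← hd] at hR; omega
        _ = 2 * h ^ l.dim := by ring
        _ ≤ (h + 1) * (h + 1) ^ l.dim :=
            Nat.mul_le_mul (by omega) (Nat.pow_le_pow_left (by omega) _)
        _ = (h + 1) ^ (l.dim + 1) := by rw [pow_succ]; ring
    · rw [if_neg hd]
      rcases Nat.lt_or_ge l.dim r.dim with hlt | hge
      · rw [Nat.max_eq_right hlt.le]
        have := aux_pow h l.dim r.dim (by omega) hlt
        omega
      · have hlt : r.dim < l.dim := by omega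
        rw [Nat.max_eq_left hlt.le]
        have := aux_pow h r.dim l.dim (by omega) hlt
        omega

def PT (g : CNF T N) (δ : Q → T → Q → Prop) (A : N) (i j : Q) (t : DTree T N) : Prop :=
  t.wf g ∧ t.rootN = A ∧ GWord δ i t.yield j

lemma exists_min_tree {g : CNF T N} {δ : Q → T → Q → Prop} {A : N} {i j : Q}
    (h : ∃ t, PT g δ A i j t) :
    ∃ t, PT g δ A i j t ∧ ∀ t', PT g δ A i j t' → t.yield.length ≤ t'.yield.length := by
  obtain ⟨t, ht⟩ := h
  obtain ⟨n, ⟨t0, ht0, hn⟩, hmin⟩ := Nat.lt_wfRel.wf.has_min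
      {n | ∃ t, PT g δ A i j t ∧ t.yield.length = n} ⟨t.yield.length, t, ht, rfl⟩
  refine ⟨t0, ht0, fun t' ht' => ?_⟩
  have := hmin t'.yield.length ⟨t', ht', rfl⟩
  change ¬ t'.yield.length < n at this
  omega

lemma key [Fintype N] [Fintype Q] (g : CNF T N) (δ : Q → T → Q → Prop) :
    ∀ (m : ℕ) (S : Finset (N × Q × Q)) (A : N) (i j : Q) (t : DTree T N),
      PT g δ A i j t → t.yield.length ≤ m →
      (∀ t', PT g δ A i j t' → t.yield.length ≤ t'.yield.length) →
      (∀ x : N × Q × Q, x ∉ S → ∀ t', PT g δ x.1 x.2.1 x.2.2 t' →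
        t.yield.length < t'.yield.length) →
      ∃ t', PT g δ A i j t' ∧ t'.height + 1 ≤ S.card := by
  classical
  intro m
  induction m with
  | zero =>
    intro S A i j t ht hm _ _
    have := one_le_yield_length t; omega
  | succ m ih =>
    intro S A i j t ht hm hminim hS
    have hmemS : (A, i, j) ∈ S := by
      by_contra hc
      exact absurd (hS _ hc t ht) (lt_irrefl _)
    have hScard : 1 ≤ S.card := Finset.card_pos.mpr ⟨_, hmemS⟩
    cases t with
    | leaf A' a =>
      refine ⟨DTree.leaf A' a, ht, ?_⟩
      simpa [DTree.height] using hScard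
    | node A' l r =>
      obtain ⟨hwf, hroot, hpath⟩ := ht
      obtain ⟨hbin, hwl, hwr⟩ := hwf
      rw [show (DTree.node A' l r).yield = l.yield ++ r.yield from rfl] at hpath
      obtain ⟨k, hkl, hkr⟩ := (gword_append _ _ _ _).1 hpath
      have hPl : PT g δ l.rootN i k l := ⟨hwl, rfl, hkl⟩
      have hPr : PT g δ r.rootN k j r := ⟨hwr, rfl, hkr⟩
      obtain ⟨l₀, hl₀, hl₀min⟩ := exists_min_tree ⟨l, hPl⟩
      obtain ⟨r₀, hr₀, hr₀min⟩ := exists_min_tree ⟨r, hPr⟩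
      have hlen : (DTree.node A' l r).yield.length = l.yield.length + r.yield.length := by
        simp [DTree.yield]
      have h1l := one_le_yield_length l
      have h1r := one_le_yield_length r
      have hll := hl₀min l hPl
      have hrr := hr₀min r hPr
      set S' := S.erase (A, i, j) with hS'
      have hcard : S'.card + 1 = S.card := by
        rw [hS', Finset.card_erase_of_mem hmemS]; omega
      have hSnew : ∀ x : N × Q × Q, x ∉ S' → ∀ t', PT g δ x.1 x.2.1 x.2.2 t' →
          (DTree.node A' l r).yield.length ≤ t'.yield.length := by
        intro x hx t' ht'
        by_cases hxe : x = (A, i, j)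
        · subst hxe
          exact hminim t' ht'
        · have hxS : x ∉ S := by
            intro hmem
            exact hx (Finset.mem_erase.mpr ⟨hxe, hmem⟩)
          exact (hS x hxS t' ht').le
      have hlen0 : l₀.yield.length < (DTree.node A' l r).yield.length := by omega
      have hren0 : r₀.yield.length < (DTree.node A' l r).yield.length := by omega
      obtain ⟨l', hl', hlh⟩ := ih S' l.rootN i k l₀ hl₀ (by omega) hl₀min
        (fun x hx t' ht' => lt_of_lt_of_le hlen0 (hSnew x hx t' ht'))
      obtain ⟨r', hr', hrh⟩ := ih S' r.rootN k j r₀ hr₀ (by omega) hr₀min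
        (fun x hx t' ht' => lt_of_lt_of_le hren0 (hSnew x hx t' ht'))
      obtain ⟨hwl', hrl', hgl'⟩ := hl'
      obtain ⟨hwr', hrr', hgr'⟩ := hr'
      refine ⟨DTree.node A' l' r', ⟨⟨?_, hwl', hwr'⟩, hroot, ?_⟩, ?_⟩
      · rw [hrl', hrr']; exact hbin
      · show GWord δ i (l'.yield ++ r'.yield) j
        exact (gword_append _ _ _ _).2 ⟨k, hgl', hgr'⟩
      · show max l'.height r'.height + 1 + 1 ≤ S.card
        omega

end Aux

theorem rational_index_of_bounded_dimension (d : ℕ) :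
    ∃ C : ℕ, ∀ (T N Q : Type) [Fintype N] [Fintype Q]
      (g : CNF T N) (δ : Q → T → Q → Prop) (I F : Set Q),
      (∀ t : DTree T N, t.wf g → t.dim ≤ d) →
      (g.Lang ∩ NfaLang δ I F).Nonempty →
      ∃ w ∈ g.Lang ∩ NfaLang δ I F,
        w.length ≤ C * (Fintype.card N * (Fintype.card Q) ^ 2) ^ d := by
  classical
  refine ⟨1, ?_⟩
  intro T N Q _ _ g δ I F hdim hne
  obtain ⟨w, hwL, hwR⟩ := hne
  obtain ⟨t, hwf, hroot, hyield⟩ := hwL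
  obtain ⟨i, hi, j, hj, hpath⟩ := hwR
  have hPt : PT g δ g.start i j t := ⟨hwf, hroot, by rw [hyield]; exact hpath⟩
  obtain ⟨t₀, ht₀, hmin⟩ := exists_min_tree ⟨t, hPt⟩
  obtain ⟨t', ht', hh⟩ := key g δ t₀.yield.length Finset.univ g.start i j t₀ ht₀ le_rfl hmin
    (fun x hx _ _ => absurd (Finset.mem_univ x) hx)
  obtain ⟨hwf', hroot', hpath'⟩ := ht'
  set M := Fintype.card N * Fintype.card Q ^ 2 with hM
  have hcard : (Finset.univ : Finset (N × Q × Q)).card = M := by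
    simp only [Finset.card_univ, Fintype.card_prod, hM]
    ring
  rw [hcard] at hh
  refine ⟨t'.yield, ⟨⟨t', hwf', hroot', rfl⟩, ⟨i, hi, j, hj, hpath'⟩⟩, ?_⟩
  have h1 : t'.yield.length ≤ (t'.height + 1) ^ t'.dim := yield_length_le t'
  have h2 : (t'.height + 1) ^ t'.dim ≤ M ^ t'.dim := Nat.pow_le_pow_left hh _
  have h3 : M ^ t'.dim ≤ M ^ d := Nat.pow_le_pow_right (by omega) (hdim t' hwf')
  calc t'.yield.length ≤ M ^ d := le_trans h1 (le_trans h2 h3)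
    _ = 1 * M ^ d := (one_mul _).symm
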